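/- Let Ξ be an x-tower site in F^2 with tower parameters m_0 > m_1 > ... > m_ν ≥ 0. Then the initial ideal of the vanishing ideal I(Ξ) with respect to the total degree lexicographic order (x ≻ y) is the monomial ideal generated by {x^{m_0+1}, x^{m_1+1}y, x^{m_2+1}y^2, ..., x^{m_ν+1}y^ν, y^{ν+1}}. -/

import Mathlib

open MvPolynomial

noncomputable def vanishingIdeal {F : Type*} [Field F] (Ξ : Set (F × F)) :
    Ideal (MvPolynomial (Fin 2) F) :=
  ⨅ ξ ∈ Ξ, RingHom.ker (eval (fun i : Fin 2 => if i = 0 then ξ.1 else ξ.2) :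
    MvPolynomial (Fin 2) F →+* F)

/-- The exponent vector of the monomial `x^a y^b`. -/
noncomputable def deg2 (a b : ℕ) : Fin 2 →₀ ℕ := Finsupp.single 0 a + Finsupp.single 1 b

/-- The tdlex order (total degree first, then lexicographically with `x ≻ y`)
on exponent pairs. -/
def tdlexLE (a b : ℕ × ℕ) : Prop :=
  a.1 + a.2 < b.1 + b.2 ∨ (a.1 + a.2 = b.1 + b.2 ∧ a.1 ≤ b.1)

/-- `x^{d.1} y^{d.2}` is the tdlex-leading monomial of `p`. -/
def IsTdlexLM {F : Type*} [Field F] (p : MvPolynomial (Fin 2) F) (d : ℕ × ℕ) : Prop :=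
  coeff (deg2 d.1 d.2) p ≠ 0 ∧
    ∀ e : Fin 2 →₀ ℕ, coeff e p ≠ 0 → tdlexLE (e 0, e 1) d

/-- The initial (leading term) ideal of `I` w.r.t. tdlex. -/
noncomputable def ltIdeal {F : Type*} [Field F] (I : Ideal (MvPolynomial (Fin 2) F)) :
    Ideal (MvPolynomial (Fin 2) F) :=
  Ideal.span {q | ∃ p ∈ I, ∃ d : ℕ × ℕ, IsTdlexLM p d ∧ q = X 0 ^ d.1 * X 1 ^ d.2}

/-!
Let `S = {x^i y^j : j ≤ ν, i ≤ m j}`. If `p ≠ 0` vanishes on the tower and its `degLex` leading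
monomial `x^a y^b` lies in `S`, then `deg p = a + b ≤ m b + b ≤ m 0`. So `p(x, y 0)`, of degree
at most `m 0`, vanishes at the `m 0 + 1` points of the bottom row, and `p = (y - y 0) q`. Then
`q` vanishes on the remaining rows and its leading monomial `x^a y^(b-1)` lies in their
staircase, so induction on the number of rows gives a contradiction. Hence every leading
monomial lies outside `S`, that is, in the monomial ideal of the statement.

Conversely, evaluation at the `|S|` points is then injective on polynomials supported on `S`,
and so it is bijective. Subtracting from `x^a y^b ∉ S` its interpolant gives an element of
`I(Ξ)` with leading monomial `x^a y^b`.
-/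

open MonomialOrder

theorem degLex_le_iff_tdlexLE {e d : Fin 2 →₀ ℕ} :
    e ≼[degLex] d ↔ tdlexLE (e 0, e 1) (d 0, d 1) := by
  rw [degLex_le_iff, Finsupp.DegLex.le_iff, ofDegLex_toDegLex, ofDegLex_toDegLex,
    Finsupp.degree_eq_sum, Finsupp.degree_eq_sum, Fin.sum_univ_two, Fin.sum_univ_two,
    le_iff_eq_or_lt, Finsupp.Lex.lt_iff, Fin.exists_fin_two]
  simp only [tdlexLE, EmbeddingLike.apply_eq_iff_eq, Finsupp.ext_iff, Fin.forall_fin_two,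
    ofLex_toLex]
  omega

@[simp] theorem deg2_apply_zero (a b : ℕ) : deg2 a b 0 = a := by simp [deg2]
@[simp] theorem deg2_apply_one (a b : ℕ) : deg2 a b 1 = b := by simp [deg2]

theorem deg2_eq (d : Fin 2 →₀ ℕ) : deg2 (d 0) (d 1) = d := by
  ext i; fin_cases i <;> simp

theorem isTdlexLM_iff {F : Type*} [Field F] {p : MvPolynomial (Fin 2) F} {d : ℕ × ℕ} :
    IsTdlexLM p d ↔ p ≠ 0 ∧ degLex.degree p = deg2 d.1 d.2 := by
  have hle (e : Fin 2 →₀ ℕ) : tdlexLE (e 0, e 1) d ↔ e ≼[degLex] deg2 d.1 d.2 := by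
    rw [degLex_le_iff_tdlexLE, deg2_apply_zero, deg2_apply_one]
  simp only [IsTdlexLM, hle, ← mem_support_iff]
  constructor
  · rintro ⟨hd, hmax⟩
    have hp : p ≠ 0 := by rintro rfl; simp at hd
    exact ⟨hp, degLex.toSyn.injective <| le_antisymm (hmax _ (degLex.degree_mem_support hp))
      (degLex.le_degree hd)⟩
  · rintro ⟨hp, hdeg⟩
    exact ⟨hdeg ▸ degLex.degree_mem_support hp, fun e he => hdeg ▸ degLex.le_degree he⟩

section

variable {F : Type*} [Field F]

theorem mem_vanishingIdeal {Ξ : Set (F × F)} {p : MvPolynomial (Fin 2) F} :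
    p ∈ vanishingIdeal Ξ ↔ ∀ ξ ∈ Ξ, eval (fun i : Fin 2 => if i = 0 then ξ.1 else ξ.2) p = 0 := by
  simp only [_root_.vanishingIdeal, Ideal.mem_iInf, RingHom.mem_ker]

noncomputable def restrictY (c : F) : MvPolynomial (Fin 2) F →ₐ[F] Polynomial F :=
  aeval fun i => if i = 0 then Polynomial.X else Polynomial.C c

theorem eval_restrictY (c t : F) (p : MvPolynomial (Fin 2) F) :
    (restrictY c p).eval t = eval (fun i : Fin 2 => if i = 0 then t else c) p := by
  have : (Polynomial.aeval t).comp (restrictY c) =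
      aeval fun i : Fin 2 => if i = 0 then t else c := by
    refine algHom_ext fun i => ?_
    fin_cases i <;> simp [restrictY]
  rw [← Polynomial.coe_aeval_eq_eval, ← AlgHom.comp_apply, this]
  rfl

theorem natDegree_restrictY_le (c : F) (p : MvPolynomial (Fin 2) F) :
    (restrictY c p).natDegree ≤ p.totalDegree := by
  conv_lhs => rw [p.as_sum, map_sum]
  refine Polynomial.natDegree_sum_le_of_forall_le _ _ fun d hd => ?_
  rw [restrictY, aeval_monomial, Finsupp.prod_fintype _ _ (by simp), Fin.prod_univ_two]
  simp only [if_true, one_ne_zero, if_false, ← Polynomial.C_pow, ← Polynomial.C_eq_algebraMap]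
  calc _ ≤ d 0 := (Polynomial.natDegree_C_mul_le _ _).trans
          ((Polynomial.natDegree_mul_C_le _ _).trans (Polynomial.natDegree_X_pow_le _))
    _ ≤ d.sum fun _ e => e := by
      rw [Finsupp.sum_fintype _ _ (by simp), Fin.sum_univ_two]; exact le_self_add
    _ ≤ p.totalDegree := le_totalDegree hd

/-- `p ↦ p(x, c)` is the identity modulo `y - c`. -/
theorem X_sub_C_dvd_of_restrictY_eq_zero {c : F} {p : MvPolynomial (Fin 2) F}
    (hp : restrictY c p = 0) : X 1 - C c ∣ p := by
  let J : Ideal (MvPolynomial (Fin 2) F) := Ideal.span {X 1 - C c}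
  have hcomp : ((Ideal.Quotient.mkₐ F J).comp (Polynomial.aeval (X 0))).comp (restrictY c) =
      Ideal.Quotient.mkₐ F J := by
    refine algHom_ext fun i => ?_
    fin_cases i
    · simp [restrictY]
    · simpa [restrictY] using Ideal.Quotient.eq.2 (Ideal.mem_span_singleton.2 ⟨-1, by ring⟩)
  rw [← Ideal.mem_span_singleton, ← Ideal.Quotient.eq_zero_iff_mem, ← Ideal.Quotient.mkₐ_eq_mk F,
    ← hcomp, AlgHom.comp_apply, hp, map_zero]

theorem degLex_degree_X_sub_C_mul {c : F} {q : MvPolynomial (Fin 2) F} (hq : q ≠ 0) :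
    degLex.degree ((X 1 - C c) * q) = Finsupp.single 1 1 + degLex.degree q := by
  have hX : degLex.degree (X 1 - C c : MvPolynomial (Fin 2) F) = Finsupp.single 1 1 := by
    rw [degree_sub_of_lt] <;> simp [degree_X, toSyn_lt_iff_ne_zero]
  rw [degree_mul _ hq, hX]
  rintro h
  simp [h, eq_comm (a := (0 : Fin 2 →₀ ℕ))] at hX

end

structure IsTower {F : Type*} (ν : ℕ) (m : ℕ → ℕ) (y : ℕ → F) (xs : ℕ → ℕ → F) : Prop where
  m_lt : ∀ j k, j < k → k ≤ ν → m k < m j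
  y_inj : ∀ j k, j ≤ ν → k ≤ ν → y j = y k → j = k
  xs_inj : ∀ j s t, j ≤ ν → s ≤ m j → t ≤ m j → xs s j = xs t j → s = t

def towerSite {F : Type*} (ν : ℕ) (m : ℕ → ℕ) (y : ℕ → F) (xs : ℕ → ℕ → F) : Set (F × F) :=
  {p | ∃ j ≤ ν, ∃ i ≤ m j, p = (xs i j, y j)}

noncomputable def staircase (ν : ℕ) (m : ℕ → ℕ) : Finset (Fin 2 →₀ ℕ) :=
  (Finset.range (ν + 1)).biUnion fun j => (Finset.range (m j + 1)).image fun i => deg2 i j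

theorem mem_staircase {ν : ℕ} {m : ℕ → ℕ} {d : Fin 2 →₀ ℕ} :
    d ∈ staircase ν m ↔ d 1 ≤ ν ∧ d 0 ≤ m (d 1) := by
  simp only [staircase, Finset.mem_biUnion, Finset.mem_image, Finset.mem_range, Nat.lt_succ_iff]
  constructor
  · rintro ⟨j, hj, i, hi, rfl⟩
    simpa using ⟨hj, hi⟩
  · rintro ⟨hj, hi⟩
    exact ⟨d 1, hj, d 0, hi, deg2_eq d⟩

theorem mem_vanishingIdeal_towerSite {F : Type*} [Field F] {ν : ℕ} {m : ℕ → ℕ} {y : ℕ → F}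
    {xs : ℕ → ℕ → F} {p : MvPolynomial (Fin 2) F} :
    p ∈ vanishingIdeal (towerSite ν m y xs) ↔
      ∀ j ≤ ν, ∀ i ≤ m j, eval (fun l : Fin 2 => if l = 0 then xs i j else y j) p = 0 := by
  rw [mem_vanishingIdeal]
  refine ⟨fun hp j hj i hi => hp (xs i j, y j) ⟨j, hj, i, hi, rfl⟩, ?_⟩
  rintro hp _ ⟨j, hj, i, hi, rfl⟩
  exact hp j hj i hi

namespace IsTower

variable {F : Type*} {ν : ℕ} {m : ℕ → ℕ} {y : ℕ → F} {xs : ℕ → ℕ → F}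

theorem tail (h : IsTower (ν + 1) m y xs) :
    IsTower ν (fun j => m (j + 1)) (fun j => y (j + 1)) (fun i j => xs i (j + 1)) where
  m_lt j k hjk hk := h.m_lt (j + 1) (k + 1) (by omega) (by omega)
  y_inj j k hj hk hjk := by simpa using h.y_inj (j + 1) (k + 1) (by omega) (by omega) hjk
  xs_inj j s t hj := h.xs_inj (j + 1) s t (by omega)

theorem m_add_le_m_zero (h : IsTower ν m y xs) {j : ℕ} (hj : j ≤ ν) : m j + j ≤ m 0 := by
  induction j with
  | zero => simp
  | succ j ih =>
    have := h.m_lt j (j + 1) (by omega) hj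
    have := ih (by omega)
    omega

variable [Field F]

theorem X_sub_C_dvd (h : IsTower ν m y xs) {p : MvPolynomial (Fin 2) F}
    (hp : p ∈ vanishingIdeal (towerSite ν m y xs)) (hdeg : p.totalDegree ≤ m 0) :
    X 1 - C (y 0) ∣ p := by
  refine X_sub_C_dvd_of_restrictY_eq_zero <|
    Polynomial.eq_zero_of_natDegree_lt_card_of_eval_eq_zero _
      (f := fun i : Fin (m 0 + 1) => xs i 0)
      (fun s t hst => Fin.ext <| h.xs_inj 0 s t ν.zero_le (by omega) (by omega) hst)
      (fun i => ?_) ?_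
  · rw [eval_restrictY]
    exact mem_vanishingIdeal_towerSite.1 hp 0 (Nat.zero_le _) i (by omega)
  · have := natDegree_restrictY_le (y 0) p
    simp only [Fintype.card_fin]
    omega

theorem mem_vanishingIdeal_tail (h : IsTower (ν + 1) m y xs) {q : MvPolynomial (Fin 2) F}
    (hq : (X 1 - C (y 0)) * q ∈ vanishingIdeal (towerSite (ν + 1) m y xs)) :
    q ∈ vanishingIdeal (towerSite ν (fun j => m (j + 1)) (fun j => y (j + 1))
      (fun i j => xs i (j + 1))) := by
  rw [mem_vanishingIdeal_towerSite] at hq ⊢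
  intro j hj i hi
  have hyj : y (j + 1) - y 0 ≠ 0 :=
    sub_ne_zero.2 fun hy => by simpa using h.y_inj (j + 1) 0 (by omega) (by omega) hy
  simpa [hyj] using hq (j + 1) (by omega) i hi

theorem totalDegree_le_of_degree_mem_staircase (h : IsTower ν m y xs)
    {p : MvPolynomial (Fin 2) F} (hd : degLex.degree p ∈ staircase ν m) :
    p.totalDegree ≤ m 0 := by
  rw [mem_staircase] at hd
  have := h.m_add_le_m_zero hd.1
  rw [← degree_degLexDegree, Finsupp.degree_eq_sum, Fin.sum_univ_two]
  omega

theorem degree_notMem_staircase {ν : ℕ} {m : ℕ → ℕ} {y : ℕ → F} {xs : ℕ → ℕ → F}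
    (h : IsTower ν m y xs) {p : MvPolynomial (Fin 2) F}
    (hp : p ∈ vanishingIdeal (towerSite ν m y xs)) (hp0 : p ≠ 0) :
    degLex.degree p ∉ staircase ν m := by
  intro hd
  obtain ⟨q, rfl⟩ := h.X_sub_C_dvd hp (h.totalDegree_le_of_degree_mem_staircase hd)
  have hq0 : q ≠ 0 := by rintro rfl; simp at hp0
  have hdeg := degLex_degree_X_sub_C_mul (c := y 0) hq0
  rw [hdeg, mem_staircase] at hd
  simp only [Finsupp.add_apply, Finsupp.single_eq_same, Finsupp.single_apply, one_ne_zero,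
    if_false, zero_add] at hd
  obtain ⟨ν, rfl⟩ : ∃ ν', ν = ν' + 1 := ⟨ν - 1, by omega⟩
  exact degree_notMem_staircase h.tail (h.mem_vanishingIdeal_tail hp) hq0
    (mem_staircase.2 ⟨by omega, by rw [add_comm] at hd; exact hd.2⟩)
termination_by ν

theorem exists_sub_mem_vanishingIdeal (h : IsTower ν m y xs) (f : MvPolynomial (Fin 2) F) :
    ∃ g ∈ restrictSupport F (staircase ν m : Set (Fin 2 →₀ ℕ)),
      f - g ∈ vanishingIdeal (towerSite ν m y xs) := by
  set S := staircase ν m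
  let V := restrictSupport F (S : Set (Fin 2 →₀ ℕ))
  let pt (s : S) : Fin 2 → F := fun l => if l = 0 then xs (s.1 0) (s.1 1) else y (s.1 1)
  have hmem {g : MvPolynomial (Fin 2) F} (hg : ∀ s, eval (pt s) g = 0) :
      g ∈ vanishingIdeal (towerSite ν m y xs) :=
    mem_vanishingIdeal_towerSite.2 fun j hj i hi => by
      simpa [pt] using hg ⟨deg2 i j, mem_staircase.2 (by simpa using ⟨hj, hi⟩)⟩
  let ev : V →ₗ[F] S → F := LinearMap.pi fun s => (aeval (pt s)).toLinearMap ∘ₗ V.subtype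
  have hinj : Function.Injective ev := by
    rw [← LinearMap.ker_eq_bot, LinearMap.ker_eq_bot']
    intro g hg
    have hgI := hmem fun s => by simpa [ev] using congrFun hg s
    by_contra hg0
    have hg0' : (g : MvPolynomial (Fin 2) F) ≠ 0 := by simpa using hg0
    exact h.degree_notMem_staircase hgI hg0' (g.2 (degLex.degree_mem_support hg0'))
  have : FiniteDimensional F V := .of_basis (basisRestrictSupport F _)
  have hrank : Module.finrank F V = Module.finrank F (S → F) := by
    rw [Module.finrank_eq_card_basis (basisRestrictSupport F _),
      Module.finrank_fintype_fun_eq_card]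
    rfl
  obtain ⟨g, hg⟩ := (LinearMap.injective_iff_surjective_of_finrank_eq_finrank hrank).1 hinj
    fun s => eval (pt s) f
  refine ⟨g, g.2, hmem fun s => ?_⟩
  simpa [ev, sub_eq_zero] using (congrFun hg s).symm

theorem exists_degree_eq (h : IsTower ν m y xs) {d : Fin 2 →₀ ℕ} (hd : d ∉ staircase ν m) :
    ∃ f ∈ vanishingIdeal (towerSite ν m y xs), f ≠ 0 ∧ degLex.degree f = d := by
  obtain ⟨g, hgS, hg⟩ := h.exists_sub_mem_vanishingIdeal (monomial d 1)
  have hgd : coeff d g = 0 := notMem_support_iff.1 fun hd' => hd (hgS hd')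
  have hf0 : monomial d 1 - g ≠ 0 := fun h0 => by
    simpa [hgd] using congrArg (coeff d) h0
  refine ⟨_, hg, hf0, ?_⟩
  by_contra hne
  have hdeg := degLex.degree_mem_support hf0
  rw [mem_support_iff, coeff_sub, coeff_monomial, if_neg (Ne.symm hne), zero_sub, neg_ne_zero,
    ← mem_support_iff] at hdeg
  exact h.degree_notMem_staircase hg hf0 (hgS hdeg)

theorem X_pow_mul_X_pow_mem_ltIdeal (h : IsTower ν m y xs) {a b : ℕ}
    (hab : ¬(b ≤ ν ∧ a ≤ m b)) :
    X 0 ^ a * X 1 ^ b ∈ ltIdeal (vanishingIdeal (towerSite ν m y xs)) := by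
  obtain ⟨f, hf, hf0, hdeg⟩ :=
    h.exists_degree_eq (d := deg2 a b) (by simpa [mem_staircase] using hab)
  exact Ideal.subset_span ⟨f, hf, (a, b), isTdlexLM_iff.2 ⟨hf0, hdeg⟩, rfl⟩

end IsTower

theorem X_pow_mul_X_pow_mem_span {F : Type*} [Field F] {ν a b : ℕ} {m : ℕ → ℕ}
    (hab : ¬(b ≤ ν ∧ a ≤ m b)) :
    X 0 ^ a * X 1 ^ b ∈ Ideal.span
      ({q | ∃ j ≤ ν, q = (X 0 ^ (m j + 1) * X 1 ^ j : MvPolynomial (Fin 2) F)} ∪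
        {(X 1 ^ (ν + 1) : MvPolynomial (Fin 2) F)}) := by
  by_cases hb : b ≤ ν
  · rw [← pow_mul_pow_sub (X 0) (show m b + 1 ≤ a by omega), mul_right_comm]
    exact Ideal.mul_mem_right _ _ (Ideal.subset_span (Or.inl ⟨b, hb, rfl⟩))
  · rw [← pow_mul_pow_sub (X 1) (show ν + 1 ≤ b by omega), mul_left_comm]
    exact Ideal.mul_mem_right _ _ (Ideal.subset_span (Or.inr rfl))

theorem tower_initial_ideal_general {F : Type*} [Field F] (ν : ℕ) (m : ℕ → ℕ)
    (y : ℕ → F) (xs : ℕ → ℕ → F)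
    (hm : ∀ j k, j < k → k ≤ ν → m k < m j)
    (hy : ∀ j k, j ≤ ν → k ≤ ν → y j = y k → j = k)
    (hx : ∀ j s t, j ≤ ν → s ≤ m j → t ≤ m j → xs s j = xs t j → s = t) :
    ltIdeal (vanishingIdeal {p : F × F | ∃ j ≤ ν, ∃ i ≤ m j, p = (xs i j, y j)}) =
      Ideal.span
        ({q | ∃ j ≤ ν, q = (X 0 ^ (m j + 1) * X 1 ^ j : MvPolynomial (Fin 2) F)} ∪
          {(X 1 ^ (ν + 1) : MvPolynomial (Fin 2) F)}) := by
  have h : IsTower ν m y xs := ⟨hm, hy, hx⟩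
  change ltIdeal (vanishingIdeal (towerSite ν m y xs)) = _
  apply le_antisymm
  · refine Ideal.span_le.2 ?_
    rintro _ ⟨p, hp, ⟨a, b⟩, hlm, rfl⟩
    obtain ⟨hp0, hdeg⟩ := isTdlexLM_iff.1 hlm
    have hout := h.degree_notMem_staircase hp hp0
    rw [hdeg, mem_staircase, deg2_apply_zero, deg2_apply_one] at hout
    exact X_pow_mul_X_pow_mem_span hout
  · refine Ideal.span_le.2 ?_
    rintro _ (⟨j, hj, rfl⟩ | rfl)
    · exact h.X_pow_mul_X_pow_mem_ltIdeal (by omega)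
    · simpa using h.X_pow_mul_X_pow_mem_ltIdeal (a := 0) (b := ν + 1) (by omega)

/-- for an x-tower site with parameters `m_0 > m_1 > ⋯ > m_ν ≥ 0`, the
initial ideal of `I(Ξ)` w.r.t. tdlex is generated by
`x^{m_0+1}, x^{m_1+1}y, …, x^{m_ν+1}y^ν, y^{ν+1}`. -/
theorem tower_initial_ideal {F : Type*} [Field F] (ν : ℕ) (m : ℕ → ℕ)
    (y : ℕ → F) (xs : ℕ → ℕ → F)
    (hm : ∀ j k, j < k → k ≤ ν → m k < m j)
    (hy : ∀ j k, j ≤ ν → k ≤ ν → y j = y k → j = k)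
    (hx : ∀ j s t, j ≤ ν → s ≤ m j → t ≤ m j → xs s j = xs t j → s = t)
    (hbottom : ∀ j ≤ ν, ∀ i ≤ m j, ∃ s ≤ m 0, xs i j = xs s 0) :
    ltIdeal (vanishingIdeal {p : F × F | ∃ j ≤ ν, ∃ i ≤ m j, p = (xs i j, y j)}) =
      Ideal.span
        ({q | ∃ j ≤ ν, q = (X 0 ^ (m j + 1) * X 1 ^ j : MvPolynomial (Fin 2) F)} ∪
          {(X 1 ^ (ν + 1) : MvPolynomial (Fin 2) F)}) :=
  tower_initial_ideal_general ν m y xs hm hy hx
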